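/- Fix z ∈ ℂ and let g(r, s) be a holomorphic function of two complex variables on an open set where (z² - r)(z² - s) ≠ 0, satisfying g(r,s)² = 1/((z² - r)(z² - s)) and g nowhere zero. Then g satisfies the partial differential equation g_{rs} = (g_r - g_s)/(2(r - s)) at all points with r ≠ s. (Here subscripts denote partial derivatives in r and s.) -/

import Mathlib

/-!
Differentiating `g² = 1/((z² - r)(z² - s))` gives `2 g g_r = g² / (z² - r)`, so, as `g ≠ 0`,
`g_r = g / (2(z² - r))` and symmetrically `g_s = g / (2(z² - s))`. Differentiating the first
identity in `s` gives `g_rs = g / (4(z² - r)(z² - s))`, and this is `(g_r - g_s) / (2(r - s))`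
because `(z² - s) - (z² - r) = r - s`.
-/

open Filter Topology

section OneVariable

variable {𝕜 : Type*} [NontriviallyNormedField 𝕜] [CharZero 𝕜] {f h : 𝕜 → 𝕜}
  {x h' : 𝕜}

theorem hasDerivAt_of_sq_eventuallyEq (hf : DifferentiableAt 𝕜 f x) (hfx : f x ≠ 0)
    (hh : HasDerivAt h h' x) (hsq : (fun y => f y ^ 2) =ᶠ[𝓝 x] h) :
    HasDerivAt f (h' / (2 * f x)) x := by
  have hh' : HasDerivAt h (2 * f x * deriv f x) x := by
    simpa [mul_comm] using (hf.hasDerivAt.pow 2).congr_of_eventuallyEq hsq.symm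
  have hderiv : h' = 2 * f x * deriv f x := hh.unique hh'
  rw [hderiv, mul_div_cancel_left₀ _ (mul_ne_zero two_ne_zero hfx)]
  exact hf.hasDerivAt

theorem deriv_eq_div_of_sq_eventuallyEq_div_sub {a c : 𝕜} (hf : DifferentiableAt 𝕜 f x)
    (hfx : f x ≠ 0) (hax : a - x ≠ 0) (hsq : ∀ᶠ y in 𝓝 x, f y ^ 2 = c / (a - y)) :
    deriv f x = f x / (2 * (a - x)) := by
  have hquot : HasDerivAt (fun y => c / (a - y)) (c / (a - x) ^ 2) x := by
    simpa using (hasDerivAt_const x c).fun_div ((hasDerivAt_id' x).const_sub a) hax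
  have hc : c = f x ^ 2 * (a - x) := ((eq_div_iff hax).mp hsq.self_of_nhds).symm
  rw [(hasDerivAt_of_sq_eventuallyEq hf hfx hquot hsq).deriv, hc]
  field_simp

end OneVariable

section TwoVariables

variable {𝕜 : Type*} [NontriviallyNormedField 𝕜] [CharZero 𝕜] {g : 𝕜 → 𝕜 → 𝕜}
  {a b r s : 𝕜}

theorem deriv_fst_eq_of_sq_eventuallyEq
    (hg : DifferentiableAt 𝕜 (fun p : 𝕜 × 𝕜 => g p.1 p.2) (r, s))
    (hnz : g r s ≠ 0) (har : a - r ≠ 0)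
    (hsq : ∀ᶠ p in 𝓝 (r, s), g p.1 p.2 ^ 2 = 1 / ((a - p.1) * (b - p.2))) :
    deriv (fun r' => g r' s) r = g r s / (2 * (a - r)) := by
  have hline : Tendsto (fun r' : 𝕜 => (r', s)) (𝓝 r) (𝓝 (r, s)) :=
    (continuous_id.prodMk continuous_const).tendsto r
  have hslice : DifferentiableAt 𝕜 (fun r' => g r' s) r :=
    DifferentiableAt.comp (f := fun r' => (r', s)) r hg (by fun_prop)
  refine deriv_eq_div_of_sq_eventuallyEq_div_sub (c := (b - s)⁻¹) hslice hnz har ?_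
  filter_upwards [hline.eventually hsq] with r' hr'
  rw [hr', mul_comm, ← div_div, one_div]

theorem deriv_snd_eq_of_sq_eventuallyEq
    (hg : DifferentiableAt 𝕜 (fun p : 𝕜 × 𝕜 => g p.1 p.2) (r, s))
    (hnz : g r s ≠ 0) (hbs : b - s ≠ 0)
    (hsq : ∀ᶠ p in 𝓝 (r, s), g p.1 p.2 ^ 2 = 1 / ((a - p.1) * (b - p.2))) :
    deriv (fun s' => g r s') s = g r s / (2 * (b - s)) := by
  have hline : Tendsto (fun s' : 𝕜 => (r, s')) (𝓝 s) (𝓝 (r, s)) :=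
    (continuous_const.prodMk continuous_id).tendsto s
  have hslice : DifferentiableAt 𝕜 (fun s' => g r s') s :=
    DifferentiableAt.comp (f := fun s' => (r, s')) s hg (by fun_prop)
  refine deriv_eq_div_of_sq_eventuallyEq_div_sub (c := (a - r)⁻¹) hslice hnz hbs ?_
  filter_upwards [hline.eventually hsq] with s' hs'
  rw [hs', ← div_div, one_div]

end TwoVariables

theorem branch_of_inverse_sqrt_satisfies_pde
    (z : ℂ) (Ω : Set (ℂ × ℂ)) (hΩ : IsOpen Ω)
    (g : ℂ → ℂ → ℂ)
    (hne : ∀ p ∈ Ω, z ^ 2 - p.1 ≠ 0 ∧ z ^ 2 - p.2 ≠ 0)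
    (hg : AnalyticOnNhd ℂ (fun p : ℂ × ℂ => g p.1 p.2) Ω)
    (hsq : ∀ p ∈ Ω, (g p.1 p.2) ^ 2 = 1 / ((z ^ 2 - p.1) * (z ^ 2 - p.2)))
    (hnz : ∀ p ∈ Ω, g p.1 p.2 ≠ 0)
    (r s : ℂ) (hmem : (r, s) ∈ Ω) (hrs : r ≠ s) :
    deriv (fun s' => deriv (fun r' => g r' s') r) s
      = (deriv (fun r' => g r' s) r - deriv (fun s' => g r s') s) / (2 * (r - s)) := by
  have hsq_near :
      ∀ p ∈ Ω, ∀ᶠ q in 𝓝 p, g q.1 q.2 ^ 2 = 1 / ((z ^ 2 - q.1) * (z ^ 2 - q.2)) :=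
    fun p hp => eventually_of_mem (hΩ.mem_nhds hp) hsq
  have hslice : ∀ᶠ s' in 𝓝 s, (r, s') ∈ Ω :=
    (hΩ.preimage (continuous_const.prodMk continuous_id)).mem_nhds hmem
  have hgr : (fun s' => deriv (fun r' => g r' s') r) =ᶠ[𝓝 s]
      fun s' => g r s' / (2 * (z ^ 2 - r)) := by
    filter_upwards [hslice] with s' hs'
    exact deriv_fst_eq_of_sq_eventuallyEq (hg _ hs').differentiableAt (hnz _ hs')
      (hne _ hs').1 (hsq_near _ hs')
  obtain ⟨hr, hs⟩ := hne _ hmem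
  have hgs := deriv_snd_eq_of_sq_eventuallyEq (hg _ hmem).differentiableAt (hnz _ hmem) hs
    (hsq_near _ hmem)
  rw [hgr.deriv_eq, deriv_div_const, hgs, hgr.eq_of_nhds]
  have hrs' : r - s ≠ 0 := sub_ne_zero.mpr hrs
  field_simp
  ring
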